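/- arXiv:2407.00654 — 6 statements merged into one kernel-verified Lean document; each statement's English description precedes it below -/
import Mathlib

section
/- Let 0 ≤ k ≤ 2n and let V = (V_i)_{i∈ℤ/2nℤ} ∈ X(k,2n). Then the tuple σV defined by (σV)_i = (V_{−i})^⊥ belongs to X(2n−k,2n): each (V_{−i})^⊥ is a (2n−k)-dimensional subspace of ℂ^{2n}, and τ₁((σV)_i) ⊆ (σV)_{i+1}, i.e. τ₁((V_{−i})^⊥) ⊆ (V_{−i−1})^⊥, for all i ∈ ℤ/2nℤ. -/
/-!
Ω is a signed antidiagonal permutation matrix, hence invertible, so the form is nondegenerate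
and `W ↦ W^⊥` sends `k`-dimensional subspaces to `(2n - k)`-dimensional ones. The shift τ₁ is
skew-adjoint for the form, `⟨τ₁ v, w⟩ = -⟨v, τ₁ w⟩` (both sides pair `v_t` with `w_{2n-2-t}`, with
signs differing by one step of the alternating sign of Ω). Hence `τ₁ W ⊆ W'` implies
`τ₁ (W'^⊥) ⊆ W^⊥`; with `W = V_{-i-1}`, `W' = V_{-i}` this is the required inclusion.
-/

open Matrix

/-- The Gram matrix Ω of the symplectic form: Ω_{s,t} = (−1)^{s+1} if s+t = 2n+1
(1-indexed) and 0 otherwise. -/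
noncomputable def Omega (n : ℕ) : Matrix (Fin (2*n)) (Fin (2*n)) ℂ :=
  Matrix.of fun s t =>
    if ((s : ℕ) + 1) + ((t : ℕ) + 1) = 2*n + 1 then (-1 : ℂ)^((s : ℕ) + 1 + 1) else 0

/-- The symplectic bilinear form ⟨v,w⟩ = vᵀ Ω w on ℂ^{2n}. -/
noncomputable def sform (n : ℕ) (v w : Fin (2*n) → ℂ) : ℂ :=
  v ⬝ᵥ (Omega n).mulVec w

/-- The form, as a linear map in its first argument (second argument fixed). -/
noncomputable def sformL (n : ℕ) (w : Fin (2*n) → ℂ) : (Fin (2*n) → ℂ) →ₗ[ℂ] ℂ where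
  toFun v := sform n v w
  map_add' a b := by simp [sform, add_dotProduct]
  map_smul' c a := by simp [sform, smul_dotProduct]

/-- Orthogonal complement W^⊥ = {v | ⟨v,w⟩ = 0 for all w ∈ W} w.r.t. the symplectic form. -/
noncomputable def sperp (n : ℕ) (W : Submodule ℂ (Fin (2*n) → ℂ)) :
    Submodule ℂ (Fin (2*n) → ℂ) :=
  ⨅ w ∈ W, LinearMap.ker (sformL n w)

theorem mem_sperp {n : ℕ} {W : Submodule ℂ (Fin (2*n) → ℂ)} {v : Fin (2*n) → ℂ} :
    v ∈ sperp n W ↔ ∀ w ∈ W, sform n v w = 0 := by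
  simp [sperp, sformL, LinearMap.mem_ker] <;> rfl

/-- The matrix of the shift map τ₁ : e_j ↦ e_{j+1} (1 ≤ j ≤ 2n−1), e_{2n} ↦ 0. -/
noncomputable def tauMat (n : ℕ) : Matrix (Fin (2*n)) (Fin (2*n)) ℂ :=
  Matrix.of fun s t => if (s : ℕ) = (t : ℕ) + 1 then 1 else 0

/-- Membership in X(k,2n): a tuple of k-dimensional subspaces of ℂ^{2n} indexed by
ℤ/2nℤ with τ₁(V_i) ⊆ V_{i+1} for all i. -/
def memX (n k : ℕ) (V : ZMod (2*n) → Submodule ℂ (Fin (2*n) → ℂ)) : Prop :=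
  (∀ i, Module.finrank ℂ (V i) = k) ∧
  (∀ i, Submodule.map (tauMat n).mulVecLin (V i) ≤ V (i + 1))

lemma Omega_apply (n : ℕ) (s t : Fin (2*n)) :
    Omega n s t = if t = s.rev then (-1) ^ (s : ℕ) else 0 := by
  have hs := s.isLt
  simp only [Omega, of_apply, Fin.ext_iff, Fin.val_rev]
  split_ifs <;> first | omega | ring

lemma Omega_mulVec_apply (n : ℕ) (w : Fin (2*n) → ℂ) (s : Fin (2*n)) :
    (Omega n *ᵥ w) s = (-1) ^ (s : ℕ) * w s.rev := by
  simp [mulVec, dotProduct, Omega_apply]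

lemma isUnit_Omega (n : ℕ) : IsUnit (Omega n) := by
  refine mulVec_injective_iff_isUnit.mp fun v w h => funext fun s => ?_
  simpa [Omega_mulVec_apply] using congrFun h s.rev

-- Mathlib's `orthogonal` puts the subspace in the first slot of the form, hence the transpose.
lemma sperp_eq_orthogonal (n : ℕ) (W : Submodule ℂ (Fin (2*n) → ℂ)) :
    sperp n W = (toBilin' (Omega n)ᵀ).orthogonal W := by
  ext v
  simp [mem_sperp, toBilin'_apply', sform, dotProduct_mulVec, vecMul_transpose, dotProduct_comm]

lemma finrank_sperp (n : ℕ) (W : Submodule ℂ (Fin (2*n) → ℂ)) :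
    Module.finrank ℂ (sperp n W) = 2*n - Module.finrank ℂ W := by
  have hdet : (Omega n)ᵀ.det ≠ 0 := by
    rw [det_transpose]
    exact ((isUnit_iff_isUnit_det _).mp (isUnit_Omega n)).ne_zero
  rw [sperp_eq_orthogonal, LinearMap.BilinForm.finrank_orthogonal
    (nondegenerate_iff_det_ne_zero.mpr hdet).toBilin', Module.finrank_fin_fun]

lemma sform_eq_sum (n : ℕ) (v w : Fin (2*n) → ℂ) :
    sform n v w = ∑ s : Fin (2*n), (-1) ^ (s : ℕ) * v s * w s.rev := by
  simp only [sform, dotProduct, Omega_mulVec_apply]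
  exact Finset.sum_congr rfl fun s _ => by ring

lemma tauMat_mulVec_apply (n : ℕ) (v : Fin (2*n) → ℂ) (s : Fin (2*n)) :
    (tauMat n *ᵥ v) s = ∑ t : Fin (2*n), if (s : ℕ) = t + 1 then v t else 0 := by
  simp [mulVec, dotProduct, tauMat]

lemma sform_tauMat_mulVec (n : ℕ) (v w : Fin (2*n) → ℂ) :
    sform n (tauMat n *ᵥ v) w = -sform n v (tauMat n *ᵥ w) := by
  simp only [sform_eq_sum, tauMat_mulVec_apply, Finset.mul_sum, Finset.sum_mul,
    ← Finset.sum_neg_distrib]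
  rw [Finset.sum_comm]
  refine Finset.sum_congr rfl fun t _ => ?_
  conv_rhs => rw [← Equiv.sum_comp Fin.revPerm]
  refine Finset.sum_congr rfl fun s _ => ?_
  have := s.isLt
  simp only [Fin.revPerm_apply, Fin.val_rev]
  split_ifs with hst
  · rw [hst, pow_succ]; ring
  · omega
  · omega
  · simp

lemma map_tauMat_sperp_le {n : ℕ} {W W' : Submodule ℂ (Fin (2*n) → ℂ)}
    (h : W.map (tauMat n).mulVecLin ≤ W') :
    (sperp n W').map (tauMat n).mulVecLin ≤ sperp n W := by
  rintro _ ⟨v, hv, rfl⟩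
  refine mem_sperp.mpr fun w hw => ?_
  rw [mulVecLin_apply, sform_tauMat_mulVec, neg_eq_zero]
  exact mem_sperp.mp hv _ (h (Submodule.mem_map_of_mem hw))

theorem statement0_general (n k : ℕ)
    (V : ZMod (2*n) → Submodule ℂ (Fin (2*n) → ℂ)) (hV : memX n k V) :
    memX n (2*n - k) (fun i => sperp n (V (-i))) := by
  refine ⟨fun i => by rw [finrank_sperp, hV.1], fun i => map_tauMat_sperp_le ?_⟩
  simpa using hV.2 (-(i + 1))

/-- if V ∈ X(k,2n), then σV := ((V_{−i})^⊥)_i belongs to X(2n−k,2n):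
each (V_{−i})^⊥ is (2n−k)-dimensional and τ₁((V_{−i})^⊥) ⊆ (V_{−i−1})^⊥ for all i. -/
theorem statement0 (n k : ℕ) (hn : 1 ≤ n) (hk : k ≤ 2*n)
    (V : ZMod (2*n) → Submodule ℂ (Fin (2*n) → ℂ)) (hV : memX n k V) :
    memX n (2*n - k) (fun i => sperp n (V (-i))) :=
  statement0_general n k V hV
end

section
/- Every (1,2n)-juggling pattern is isotropic: for every J ∈ JP(1,2n) and every i ∈ ℤ/2nℤ, J_i ⊆ R(J_{−i}); equivalently, there exist no i ∈ ℤ/2nℤ and x ∈ {1,…,2n} with J_i = {x} and J_{−i} = {2n+1−x}. -/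
/-- A (k,2n)-juggling pattern: a tuple, indexed by ℤ/2nℤ, of k-element subsets of
{1,…,2n} such that for all i and all j ∈ {1,…,2n−1}, j ∈ J_i implies j+1 ∈ J_{i+1}. -/
def IsJP (n k : ℕ) (J : ZMod (2*n) → Finset ℕ) : Prop :=
  (∀ i, J i ⊆ Finset.Icc 1 (2*n)) ∧ (∀ i, (J i).card = k) ∧
  (∀ i, ∀ j : ℕ, 1 ≤ j → j ≤ 2*n - 1 → j ∈ J i → j + 1 ∈ J (i + 1))

/-- RI = {1,…,2n} ∖ {2n+1−i : i ∈ I}. -/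
def RSet (n : ℕ) (I : Finset ℕ) : Finset ℕ :=
  (Finset.Icc 1 (2*n)) \ (I.image fun i => 2*n + 1 - i)

/-- (RJ)_i = R(J_{−i}). -/
def RJP (n : ℕ) (J : ZMod (2*n) → Finset ℕ) : ZMod (2*n) → Finset ℕ :=
  fun i => RSet n (J (-i))

/-- every (1,2n)-juggling pattern is isotropic: J_i ⊆ R(J_{−i}) for all i;
equivalently, there are no i and x with J_i = {x} and J_{−i} = {2n+1−x}. -/
theorem statement6 (n : ℕ) (hn : 1 ≤ n)
    (J : ZMod (2*n) → Finset ℕ) (hJ : IsJP n 1 J) :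
    (∀ i, J i ⊆ RSet n (J (-i))) ∧
      ¬ ∃ (i : ZMod (2*n)) (x : ℕ), 1 ≤ x ∧ x ≤ 2*n ∧
          J i = {x} ∧ J (-i) = {2*n + 1 - x} := by
  haveI : NeZero (2*n) := ⟨by omega⟩
  obtain ⟨hsub, hcard, hstep⟩ := hJ
  -- every J i is a singleton {y} with 1 ≤ y ≤ 2n
  have hsing : ∀ i : ZMod (2*n), ∃ y, 1 ≤ y ∧ y ≤ 2*n ∧ J i = {y} := by
    intro i
    obtain ⟨y, hy⟩ := Finset.card_eq_one.mp (hcard i)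
    have hmem : y ∈ J i := by rw [hy]; exact Finset.mem_singleton_self y
    have hb := hsub i hmem
    rw [Finset.mem_Icc] at hb
    exact ⟨y, hb.1, hb.2, hy⟩
  -- forward propagation
  have hprop : ∀ (j : ZMod (2*n)) (y m : ℕ), J j = {y} → 1 ≤ y → y + m ≤ 2*n →
      J (j + (m : ZMod (2*n))) = {y + m} := by
    intro j y m
    induction m with
    | zero => intro h _ _; simpa using h
    | succ m ih =>
      intro h hy hle
      have h1 : J (j + (m : ZMod (2*n))) = {y + m} := ih h hy (by omega)
      have hmem : y + m ∈ J (j + (m : ZMod (2*n))) := by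
        rw [h1]; exact Finset.mem_singleton_self _
      have hmem2 : y + m + 1 ∈ J (j + (m : ZMod (2*n)) + 1) :=
        hstep _ _ (by omega) (by omega) hmem
      obtain ⟨z, _, _, hz⟩ := hsing (j + (m : ZMod (2*n)) + 1)
      rw [hz, Finset.mem_singleton] at hmem2
      have hidx : j + ((m + 1 : ℕ) : ZMod (2*n)) = j + (m : ZMod (2*n)) + 1 := by
        push_cast; ring
      rw [hidx, hz, ← hmem2, Nat.add_assoc]
  -- the key impossibility
  have hkey : ∀ (i : ZMod (2*n)) (x : ℕ), 1 ≤ x → x ≤ 2*n →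
      J i = {x} → J (-i) = {2*n + 1 - x} → False := by
    intro i x hx1 hx2 hxi hxmi
    set t := (i + i).val with ht
    have htlt : t < 2*n := ZMod.val_lt (i + i)
    have hteven : Even t := by
      have : t = (i.val + i.val) % (2*n) := by rw [ht, ZMod.val_add]
      rw [this, ← two_mul, Nat.mul_mod_mul_left]
      exact ⟨i.val % n, by ring⟩
    have hcast : ((t : ℕ) : ZMod (2*n)) = i + i := by
      rw [ht, ZMod.natCast_val, ZMod.cast_id]
    obtain ⟨r, hr⟩ := hteven
    by_cases hc : t < x
    · -- propagate from -i by t steps, landing at i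
      have h1 : J (-i + (t : ZMod (2*n))) = {2*n + 1 - x + t} :=
        hprop (-i) (2*n + 1 - x) t hxmi (by omega) (by omega)
      have hidx : -i + (t : ZMod (2*n)) = i := by rw [hcast]; ring
      rw [hidx, hxi] at h1
      have := Finset.singleton_injective h1
      omega
    · -- propagate from i by 2n - t steps, landing at -i
      have h1 : J (i + ((2*n - t : ℕ) : ZMod (2*n))) = {x + (2*n - t)} :=
        hprop i x (2*n - t) hxi hx1 (by omega)
      have hidx : i + ((2*n - t : ℕ) : ZMod (2*n)) = -i := by
        have h2n : ((2*n : ℕ) : ZMod (2*n)) = 0 := ZMod.natCast_self _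
        rw [Nat.cast_sub htlt.le, hcast, h2n]
        ring
      rw [hidx, hxmi] at h1
      have := Finset.singleton_injective h1
      omega
  constructor
  · intro i a ha
    obtain ⟨x, hx1, hx2, hxi⟩ := hsing i
    obtain ⟨y, hy1, hy2, hyi⟩ := hsing (-i)
    rw [hxi, Finset.mem_singleton] at ha
    subst ha
    rw [RSet, Finset.mem_sdiff, Finset.mem_Icc]
    refine ⟨⟨hx1, hx2⟩, ?_⟩
    intro hmem
    rw [Finset.mem_image] at hmem
    obtain ⟨b, hb, hbe⟩ := hmem
    rw [hyi, Finset.mem_singleton] at hb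
    have hy' : y = 2*n + 1 - a := by omega
    exact hkey i a hx1 hx2 hxi (by rw [hyi, hy'])
  · rintro ⟨i, x, hx1, hx2, hxi, hxmi⟩
    exact hkey i x hx1 hx2 hxi hxmi
end

section
/- Let A = (A_i)_{i∈ℤ/2nℤ} ∈ G, and for i ∈ ℤ/2nℤ and j ∈ {1,…,2n} set a_j^{(i)} = (A_i)_{j,1} (the entries of the first column of A_i). Then A is symplectic, i.e. ⟨A_i v, A_{−i} w⟩ = ⟨v,w⟩ for all i ∈ ℤ/2nℤ and all v, w ∈ ℂ^{2n}, if and only if the following two conditions hold: (i) a_1^{(i)}·a_1^{(j)} = 1 for all i, j ∈ ℤ/2nℤ with i+j = 1 in ℤ/2nℤ; (ii) Σ_{ℓ=0}^{r−1} (−1)^ℓ · a_{1+ℓ}^{(i)} · a_{r−ℓ}^{(r−i)} = 0 for all i ∈ ℤ/2nℤ and all integers r with 2 ≤ r ≤ 2n, where the superscript r−i is computed in ℤ/2nℤ. -/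
set_option maxHeartbeats 1000000


open Matrix

/-- Membership in G = Aut(U_{[2n]}) : tuples of invertible matrices
with A_{i+1}τ₁ = τ₁A_i for all i. -/
def memG (n : ℕ) (A : ZMod (2*n) → Matrix (Fin (2*n)) (Fin (2*n)) ℂ) : Prop :=
  (∀ i, IsUnit (A i)) ∧ (∀ i, A (i + 1) * tauMat n = tauMat n * A i)

/-- a_j^{(i)} = (A_i)_{j,1}, the j-th entry (1-indexed) of the first column of A_i. -/
noncomputable def colEntry (n : ℕ) (A : ZMod (2*n) → Matrix (Fin (2*n)) (Fin (2*n)) ℂ)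
    (j : ℕ) (i : ZMod (2*n)) : ℂ :=
  if h : j - 1 < 2*n then A i ⟨j - 1, h⟩ ⟨0, by omega⟩ else 0

lemma struct (n : ℕ) (A : ZMod (2*n) → Matrix (Fin (2*n)) (Fin (2*n)) ℂ)
    (hA : ∀ i, A (i + 1) * tauMat n = tauMat n * A i) :
    ∀ (k : ℕ) (hk : k < 2*n) (i : ZMod (2*n)) (s : Fin (2*n)),
      A i s ⟨k, hk⟩ = if h : k ≤ (s : ℕ) then
        A (i - (k : ℕ)) ⟨(s : ℕ) - k, by omega⟩ ⟨0, by omega⟩ else 0 := by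
  intro k
  induction k with
  | zero =>
    intro hk i s
    simp only [Nat.zero_le, dif_pos, Nat.sub_zero, Nat.cast_zero, sub_zero]
  | succ k ih =>
    intro hk i s
    have hk' : k < 2*n := by omega
    -- from the relation at i - 1
    have hrel := hA (i - 1)
    rw [sub_add_cancel] at hrel
    have h1 : (A i * tauMat n) s ⟨k, hk'⟩ = A i s ⟨k+1, hk⟩ := by
      rw [Matrix.mul_apply]
      rw [Finset.sum_eq_single (⟨k+1, hk⟩ : Fin (2*n))]
      · simp [tauMat]
      · intro b _ hb
        have : (b : ℕ) ≠ k + 1 := fun h => hb (Fin.ext h)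
        simp [tauMat, this]
      · simp
    have h2 : (tauMat n * A (i - 1)) s ⟨k, hk'⟩ =
        if hs : 1 ≤ (s : ℕ) then A (i-1) ⟨(s:ℕ) - 1, by omega⟩ ⟨k, hk'⟩ else 0 := by
      rw [Matrix.mul_apply]
      split
      · next hs =>
        rw [Finset.sum_eq_single (⟨(s:ℕ)-1, by omega⟩ : Fin (2*n))]
        · simp only [tauMat, Matrix.of_apply]
          rw [if_pos (by omega)]
          ring
        · intro b _ hb
          have hb1 : (b:ℕ) < 2*n := b.isLt
          have : (s : ℕ) ≠ (b : ℕ) + 1 := by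
            intro h; apply hb; apply Fin.ext; simp; omega
          simp [tauMat, this]
        · simp
      · next hs =>
        apply Finset.sum_eq_zero
        intro b _
        have : (s : ℕ) ≠ (b : ℕ) + 1 := by omega
        simp [tauMat, this]
    have key : A i s ⟨k+1, hk⟩ =
        if hs : 1 ≤ (s : ℕ) then A (i-1) ⟨(s:ℕ) - 1, by omega⟩ ⟨k, hk'⟩ else 0 := by
      rw [← h1, hrel, h2]
    rw [key]
    by_cases hs : 1 ≤ (s : ℕ)
    · rw [dif_pos hs, ih hk' (i-1) ⟨(s:ℕ)-1, by omega⟩]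
      by_cases hks : k + 1 ≤ (s : ℕ)
      · rw [dif_pos (by simpa using Nat.le_sub_one_of_lt hks), dif_pos hks]
        have : i - 1 - (k : ℕ) = i - ((k:ℕ)+1 : ℕ) := by push_cast; ring
        rw [this]
        congr 1
        apply Fin.ext; simp; omega
      · rw [dif_neg (by simp; omega), dif_neg hks]
    · rw [dif_neg hs, dif_neg (by omega)]

noncomputable def Gf (n : ℕ) (A : ZMod (2*n) → Matrix (Fin (2*n)) (Fin (2*n)) ℂ)
    (i : ZMod (2*n)) (p q : Fin (2*n)) (s : ℕ) : ℂ :=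
  if h : (p:ℕ) ≤ s ∧ s < 2*n - (q:ℕ) then
    (-1:ℂ)^s * A (i - ((p:ℕ) : ZMod (2*n))) ⟨s - (p:ℕ), by omega⟩ ⟨0, by omega⟩ *
      A (-i - ((q:ℕ) : ZMod (2*n))) ⟨2*n - 1 - (q:ℕ) - s, by omega⟩ ⟨0, by omega⟩
  else 0

lemma Gf_neg (n : ℕ) (A : ZMod (2*n) → Matrix (Fin (2*n)) (Fin (2*n)) ℂ)
    (i : ZMod (2*n)) (p q : Fin (2*n)) (s : ℕ)
    (h : ¬ ((p:ℕ) ≤ s ∧ s < 2*n - (q:ℕ))) : Gf n A i p q s = 0 := dif_neg h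

lemma Gf_pos (n : ℕ) (A : ZMod (2*n) → Matrix (Fin (2*n)) (Fin (2*n)) ℂ)
    (i : ZMod (2*n)) (p q : Fin (2*n)) (s : ℕ)
    (h : (p:ℕ) ≤ s ∧ s < 2*n - (q:ℕ)) : Gf n A i p q s =
    (-1:ℂ)^s * A (i - ((p:ℕ) : ZMod (2*n))) ⟨s - (p:ℕ), by omega⟩ ⟨0, by omega⟩ *
      A (-i - ((q:ℕ) : ZMod (2*n))) ⟨2*n - 1 - (q:ℕ) - s, by omega⟩ ⟨0, by omega⟩ := dif_pos h

lemma keyM (n : ℕ) (hn : 1 ≤ n) (A : ZMod (2*n) → Matrix (Fin (2*n)) (Fin (2*n)) ℂ)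
    (hA : ∀ i, A (i + 1) * tauMat n = tauMat n * A i) (i : ZMod (2*n)) (p q : Fin (2*n)) :
    ((A i)ᵀ * Omega n * A (-i)) p q =
      (-1:ℂ)^(p:ℕ) * ∑ l ∈ Finset.range (2*n - (p:ℕ) - (q:ℕ)),
        (-1:ℂ)^l * colEntry n A (1+l) (i - ((p:ℕ) : ZMod (2*n))) *
          colEntry n A ((2*n - (p:ℕ) - (q:ℕ)) - l)
            (((2*n - (p:ℕ) - (q:ℕ) : ℕ) : ZMod (2*n)) - (i - ((p:ℕ) : ZMod (2*n)))) := by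
  set r' : ℕ := 2*n - (p:ℕ) - (q:ℕ) with hr'
  have claim1 : ∀ t : Fin (2*n), ((A i)ᵀ * Omega n) p t =
      (-1:ℂ)^(2*n - 1 - (t:ℕ)) * A i ⟨2*n - 1 - (t:ℕ), by omega⟩ p := by
    intro t
    rw [Matrix.mul_apply]
    rw [Finset.sum_eq_single (⟨2*n - 1 - (t:ℕ), by omega⟩ : Fin (2*n))]
    · simp only [Omega, Matrix.of_apply, Matrix.transpose_apply]
      rw [if_pos (by omega)]
      rw [pow_succ, pow_succ]
      ring
    · intro b _ hb
      have : (b:ℕ) + 1 + ((t:ℕ) + 1) ≠ 2*n + 1 := by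
        intro h; apply hb; apply Fin.ext; simp; omega
      simp [Omega, Matrix.transpose_apply, this]
    · simp
  have claim2 : ∀ t : Fin (2*n),
      ((A i)ᵀ * Omega n) p t * A (-i) t q = Gf n A i p q (2*n - 1 - (t:ℕ)) := by
    intro t
    rw [claim1 t]
    have hs1 := struct n A hA (p:ℕ) p.isLt i ⟨2*n - 1 - (t:ℕ), by omega⟩
    have hs2 := struct n A hA (q:ℕ) q.isLt (-i) t
    simp only [Fin.eta] at hs1 hs2
    by_cases h1 : (p:ℕ) ≤ 2*n - 1 - (t:ℕ) ∧ 2*n - 1 - (t:ℕ) < 2*n - (q:ℕ)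
    · rw [dif_pos h1.1] at hs1
      rw [dif_pos (by omega : (q:ℕ) ≤ (t:ℕ))] at hs2
      rw [hs1, hs2, Gf_pos n A i p q _ h1]
      have he1 : (⟨2*n - 1 - (q:ℕ) - (2*n - 1 - (t:ℕ)), by omega⟩ : Fin (2*n)) =
          (⟨(t:ℕ) - (q:ℕ), by omega⟩ : Fin (2*n)) := by apply Fin.ext; simp; omega
      rw [he1]
    · rw [Gf_neg n A i p q _ h1]
      rcases not_and_or.mp h1 with h | h
      · rw [dif_neg h] at hs1
        rw [hs1]; ring
      · rw [dif_neg (by omega : ¬ ((q:ℕ) ≤ (t:ℕ)))] at hs2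
        rw [hs2]; ring
  have step1 : ((A i)ᵀ * Omega n * A (-i)) p q = ∑ s ∈ Finset.range (2*n), Gf n A i p q s := by
    rw [Matrix.mul_apply]
    calc ∑ t : Fin (2*n), ((A i)ᵀ * Omega n) p t * A (-i) t q
        = ∑ t : Fin (2*n), Gf n A i p q (2*n - 1 - (t:ℕ)) :=
          Finset.sum_congr rfl (fun t _ => claim2 t)
      _ = ∑ m ∈ Finset.range (2*n), Gf n A i p q (2*n - 1 - m) :=
          Fin.sum_univ_eq_sum_range (fun m => Gf n A i p q (2*n - 1 - m)) (2*n)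
      _ = ∑ s ∈ Finset.range (2*n), Gf n A i p q s := Finset.sum_range_reflect _ (2*n)
  rw [step1]
  have step2 : ∑ s ∈ Finset.range (2*n), Gf n A i p q s =
      ∑ s ∈ Finset.Ico (p:ℕ) (2*n), Gf n A i p q s := by
    symm
    apply Finset.sum_subset
    · intro x hx; simp at hx ⊢; omega
    · intro x hx hx'
      simp at hx hx'
      exact Gf_neg n A i p q x (by omega)
  rw [step2, Finset.sum_Ico_eq_sum_range]
  have step3 : ∑ l ∈ Finset.range (2*n - (p:ℕ)), Gf n A i p q ((p:ℕ) + l) =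
      ∑ l ∈ Finset.range r', Gf n A i p q ((p:ℕ) + l) := by
    symm
    apply Finset.sum_subset
    · intro x hx; simp at hx ⊢; omega
    · intro x hx hx'
      simp at hx hx'
      exact Gf_neg n A i p q _ (by omega)
  rw [step3, Finset.mul_sum]
  apply Finset.sum_congr rfl
  intro l hl
  simp only [Finset.mem_range] at hl
  have hpq : (p:ℕ) + (q:ℕ) + r' = 2*n := by omega
  rw [Gf_pos n A i p q _ ⟨by omega, by omega⟩]
  have hc1 : colEntry n A (1+l) (i - ((p:ℕ) : ZMod (2*n))) =
      A (i - ((p:ℕ) : ZMod (2*n))) ⟨l, by omega⟩ ⟨0, by omega⟩ := by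
    rw [colEntry, dif_pos (by omega : 1 + l - 1 < 2*n)]
    congr 1
    apply Fin.ext; simp
  have hcast : ((r' : ℕ) : ZMod (2*n)) - (i - ((p:ℕ) : ZMod (2*n))) =
      -i - ((q:ℕ) : ZMod (2*n)) := by
    have h3 : (((p:ℕ) : ZMod (2*n)) + ((q:ℕ) : ZMod (2*n)) + ((r' : ℕ) : ZMod (2*n))) = 0 := by
      rw [← Nat.cast_add, ← Nat.cast_add, hpq, ZMod.natCast_self]
    linear_combination h3
  have hc2 : colEntry n A (r' - l) (((r' : ℕ) : ZMod (2*n)) - (i - ((p:ℕ) : ZMod (2*n)))) =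
      A (-i - ((q:ℕ) : ZMod (2*n))) ⟨2*n - 1 - (q:ℕ) - ((p:ℕ) + l), by omega⟩ ⟨0, by omega⟩ := by
    rw [colEntry, dif_pos (by omega : r' - l - 1 < 2*n), hcast]
    congr 1
    apply Fin.ext; simp; omega
  rw [hc1, hc2]
  have hidx : (⟨(p:ℕ) + l - (p:ℕ), by omega⟩ : Fin (2*n)) = ⟨l, by omega⟩ := by
    apply Fin.ext; simp
  rw [hidx, pow_add]
  ring

lemma sform_eq (n : ℕ) (M N : Matrix (Fin (2*n)) (Fin (2*n)) ℂ) (v w : Fin (2*n) → ℂ) :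
    sform n (M.mulVec v) (N.mulVec w) = v ⬝ᵥ ((Mᵀ * Omega n * N).mulVec w) := by
  unfold sform
  rw [Matrix.mulVec_mulVec, Matrix.dotProduct_mulVec, ← Matrix.vecMul_transpose,
    Matrix.vecMul_vecMul, ← Matrix.dotProduct_mulVec, mul_assoc]

lemma matrix_of_forall {n : ℕ} (B C : Matrix (Fin (2*n)) (Fin (2*n)) ℂ)
    (h : ∀ v w : Fin (2*n) → ℂ, v ⬝ᵥ B.mulVec w = v ⬝ᵥ C.mulVec w) : B = C := by
  ext p q
  have := h (Pi.single p 1) (Pi.single q 1)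
  simpa [single_dotProduct] using this

/-- A ∈ G is symplectic iff (i) a_1^{(i)}·a_1^{(j)} = 1 whenever
i + j = 1 in ℤ/2nℤ, and (ii) Σ_{ℓ=0}^{r−1} (−1)^ℓ a_{1+ℓ}^{(i)} a_{r−ℓ}^{(r−i)} = 0
for all i ∈ ℤ/2nℤ and 2 ≤ r ≤ 2n. -/
theorem statement12 (n : ℕ) (hn : 1 ≤ n)
    (A : ZMod (2*n) → Matrix (Fin (2*n)) (Fin (2*n)) ℂ) (hA : memG n A) :
    (∀ (i : ZMod (2*n)) (v w : Fin (2*n) → ℂ),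
        sform n ((A i).mulVec v) ((A (-i)).mulVec w) = sform n v w)
      ↔ ((∀ i j : ZMod (2*n), i + j = 1 → colEntry n A 1 i * colEntry n A 1 j = 1) ∧
         (∀ (i : ZMod (2*n)) (r : ℕ), 2 ≤ r → r ≤ 2*n →
            ∑ l ∈ Finset.range r,
              (-1 : ℂ)^l * colEntry n A (1 + l) i * colEntry n A (r - l)
                ((r : ZMod (2*n)) - i) = 0)) := by
  have hmat_iff : (∀ (i : ZMod (2*n)) (v w : Fin (2*n) → ℂ),
      sform n ((A i).mulVec v) ((A (-i)).mulVec w) = sform n v w) ↔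
      (∀ i : ZMod (2*n), (A i)ᵀ * Omega n * A (-i) = Omega n) := by
    constructor
    · intro h i
      apply matrix_of_forall
      intro v w
      have := h i v w
      rw [sform_eq] at this
      exact this
    · intro h i v w
      rw [sform_eq, h i]
      rfl
  rw [hmat_iff]
  constructor
  · intro hmat
    constructor
    · intro i j hij
      have hq : 2*n - 1 < 2*n := by omega
      have hp : 0 < 2*n := by omega
      have := congrFun (congrFun (hmat i) ⟨0, hp⟩) ⟨2*n-1, hq⟩
      rw [keyM n hn A hA.2 i ⟨0, hp⟩ ⟨2*n-1, hq⟩] at this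
      simp only [Fin.val_mk] at this
      have e1 : 2*n - 0 - (2*n - 1) = 1 := by omega
      rw [e1] at this
      rw [Finset.sum_range_one] at this
      simp only [Nat.cast_zero, sub_zero, Nat.cast_one, pow_zero, one_mul, Nat.sub_zero,
        Nat.add_zero] at this
      have hom : Omega n ⟨0, hp⟩ ⟨2*n-1, hq⟩ = 1 := by
        simp only [Omega, Matrix.of_apply, Fin.val_mk]
        rw [if_pos (by omega)]
        norm_num
      rw [hom] at this
      have hj : j = 1 - i := by rw [← hij]; ring
      rw [hj]
      exact this
    · intro i r hr2 hr2n
      have hq : 2*n - r < 2*n := by omega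
      have hp : 0 < 2*n := by omega
      have := congrFun (congrFun (hmat i) ⟨0, hp⟩) ⟨2*n - r, hq⟩
      rw [keyM n hn A hA.2 i ⟨0, hp⟩ ⟨2*n - r, hq⟩] at this
      simp only [Fin.val_mk] at this
      have e1 : 2*n - 0 - (2*n - r) = r := by omega
      rw [e1] at this
      simp only [Nat.cast_zero, sub_zero, pow_zero, one_mul] at this
      have hom : Omega n ⟨0, hp⟩ ⟨2*n - r, hq⟩ = 0 := by
        simp only [Omega, Matrix.of_apply, Fin.val_mk]
        rw [if_neg (by omega)]
      rw [hom] at this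
      exact this
  · intro hcond i
    ext p q
    rw [keyM n hn A hA.2 i p q]
    by_cases hcase : (p:ℕ) + (q:ℕ) + 1 = 2*n
    · -- r' = 1
      have e1 : 2*n - (p:ℕ) - (q:ℕ) = 1 := by omega
      rw [e1, Finset.sum_range_one]
      simp only [Nat.cast_one, pow_zero, one_mul, Nat.sub_zero, Nat.add_zero]
      have h1 := hcond.1 (i - ((p:ℕ) : ZMod (2*n))) (1 - (i - ((p:ℕ) : ZMod (2*n))))
        (by ring)
      rw [h1]
      simp only [Omega, Matrix.of_apply]
      rw [if_pos (by omega)]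
      rw [pow_succ, pow_succ]
      ring
    · by_cases hcase2 : (p:ℕ) + (q:ℕ) + 2 ≤ 2*n
      · -- r' ≥ 2
        have hr' : 2 ≤ 2*n - (p:ℕ) - (q:ℕ) := by omega
        have hr'' : 2*n - (p:ℕ) - (q:ℕ) ≤ 2*n := by omega
        rw [hcond.2 (i - ((p:ℕ) : ZMod (2*n))) (2*n - (p:ℕ) - (q:ℕ)) hr' hr'']
        simp only [Omega, Matrix.of_apply]
        rw [if_neg (by omega)]
        ring
      · -- r' = 0
        have e1 : 2*n - (p:ℕ) - (q:ℕ) = 0 := by omega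
        rw [e1]
        simp only [Finset.range_zero, Finset.sum_empty, mul_zero]
        simp only [Omega, Matrix.of_apply]
        rw [if_neg (by omega)]
end

section
/- For a ∈ {1,…,2n} and b ∈ ℤ/2nℤ, let x(a,b) = (x(a,b)_c)_{c∈ℤ/2nℤ} be the tuple of 2n×2n complex matrices whose entry (x(a,b)_c)_{s,t} equals 1 if there exists an integer j with 0 ≤ j ≤ 2n−a, c = b+j in ℤ/2nℤ, s = a+j and t = 1+j, and equals 0 otherwise. Then for all a ∈ {1,…,2n}, b ∈ ℤ/2nℤ and i ∈ ℤ/2nℤ: Ω·(x(a,b)_{−i})ᵀ·Ω = (−1)^a · x(a, a−b)_i, where a−b is computed in ℤ/2nℤ. -/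
open Matrix

open Classical in
/-- The basis element x(a,b) of 𝔤 = End(U_{[2n]}): the tuple of matrices whose
c-th component has (s,t)-entry 1 (1-indexed) iff there is 0 ≤ j ≤ 2n−a with
c = b+j, s = a+j and t = 1+j, and 0 otherwise. -/
noncomputable def xgen (n a : ℕ) (b : ZMod (2*n)) :
    ZMod (2*n) → Matrix (Fin (2*n)) (Fin (2*n)) ℂ :=
  fun c => Matrix.of fun s t =>
    if ∃ j : ℕ, j ≤ 2*n - a ∧ c = b + (j : ZMod (2*n)) ∧
        (s : ℕ) + 1 = a + j ∧ (t : ℕ) + 1 = 1 + j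
    then 1 else 0

lemma Omega_mul_mul_Omega_apply (n : ℕ) (M : Matrix (Fin (2*n)) (Fin (2*n)) ℂ)
    (s t : Fin (2*n)) :
    (Omega n * M * Omega n) s t = (-1) ^ ((s : ℕ) + t.rev) * M s.rev t.rev := by
  have hrev : ∀ k : Fin (2*n), t = k.rev ↔ k = t.rev := fun k => by
    rw [eq_comm, Fin.rev_eq_iff]
  simp [mul_apply, Omega_apply, hrev]
  ring

lemma xgen_apply (n a : ℕ) (b c : ZMod (2*n)) (s t : Fin (2*n)) :
    xgen n a b c s t = if (s : ℕ) + 1 = a + t ∧ c = b + (t : ℕ) then 1 else 0 := by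
  have hs := s.is_lt
  simp only [xgen, of_apply]
  congr 1
  refine propext ⟨fun ⟨j, _, hc, hsj, htj⟩ => ?_,
    fun ⟨hst, hc⟩ => ⟨t, by omega, hc, hst, by omega⟩⟩
  obtain rfl : j = t := by omega
  exact ⟨hsj, hc⟩

lemma rev_index_conditions_iff (n a : ℕ) (b i : ZMod (2*n)) (s t : Fin (2*n)) :
    ((t.rev : ℕ) + 1 = a + s.rev ∧ -i = b + (s.rev : ℕ)) ↔
      ((s : ℕ) + 1 = a + t ∧ i = (a - b) + (t : ℕ)) := by
  have hs := s.is_lt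
  have ht := t.is_lt
  have hrows : (t.rev : ℕ) + 1 = a + s.rev ↔ (s : ℕ) + 1 = a + t := by
    rw [Fin.val_rev, Fin.val_rev]; omega
  rw [hrows]
  refine and_congr_right fun hst => ?_
  have hsum : (s.rev : ℕ) + (a + t) = 2 * n := by rw [Fin.val_rev]; omega
  have hcast : ((s.rev : ℕ) : ZMod (2*n)) = -(a + t) := by
    rw [eq_neg_iff_add_eq_zero]
    exact_mod_cast (congrArg (Nat.cast : ℕ → ZMod (2 * n)) hsum).trans (ZMod.natCast_self _)
  rw [hcast]
  constructor <;> intro h <;> linear_combination -h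

theorem statement13_general (n : ℕ) (a : ℕ)
    (b i : ZMod (2*n)) :
    Omega n * (xgen n a b (-i))ᵀ * Omega n
      = ((-1 : ℂ)^a) • xgen n a ((a : ZMod (2*n)) - b) i := by
  ext s t
  simp only [Matrix.smul_apply, Omega_mul_mul_Omega_apply, transpose_apply, xgen_apply,
    rev_index_conditions_iff, smul_eq_mul]
  split_ifs with h
  -- `s + t.rev + 2 = a + 2n`, so both signs have the same parity
  · have ht := t.is_lt
    rw [neg_one_pow_eq_pow_mod_two, neg_one_pow_eq_pow_mod_two (n := a), Fin.val_rev]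
    congr 2
    omega
  · simp

/-- Ω·(x(a,b)_{−i})ᵀ·Ω = (−1)^a · x(a, a−b)_i for all a ∈ {1,…,2n},
b ∈ ℤ/2nℤ and i ∈ ℤ/2nℤ. -/
theorem statement13 (n : ℕ) (hn : 1 ≤ n) (a : ℕ) (ha1 : 1 ≤ a) (ha2 : a ≤ 2*n)
    (b i : ZMod (2*n)) :
    Omega n * (xgen n a b (-i))ᵀ * Omega n
      = ((-1 : ℂ)^a) • xgen n a ((a : ZMod (2*n)) - b) i :=
  statement13_general n a b i
end

section
/- Let n ≥ 1. The complex vector space {(X_i)_{i∈ℤ/2nℤ} : each X_i is a 2n×2n complex matrix, τ₁X_i = X_{i+1}τ₁ for all i ∈ ℤ/2nℤ, and X_i = Ω·X_{−i}ᵀ·Ω for all i ∈ ℤ/2nℤ} has dimension 2n² + n over ℂ. (This space is the Lie algebra of the symplectic automorphism group G^{sp}; consequently dim G^{sp} = 2n² + n.) -/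
open Matrix

/-- The Lie algebra of the symplectic automorphism group G^{sp}: tuples
(X_i)_{i ∈ ℤ/2nℤ} of 2n×2n matrices with τ₁X_i = X_{i+1}τ₁ and
X_i = Ω·X_{−i}ᵀ·Ω for all i. -/
noncomputable def sympLie (n : ℕ) :
    Submodule ℂ (ZMod (2*n) → Matrix (Fin (2*n)) (Fin (2*n)) ℂ) where
  carrier := {X | (∀ i, tauMat n * X i = X (i + 1) * tauMat n) ∧
                  (∀ i, X i = Omega n * (X (-i))ᵀ * Omega n)}
  zero_mem' := by
    constructor <;> intro i <;> simp
  add_mem' := by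
    rintro X Y ⟨hX1, hX2⟩ ⟨hY1, hY2⟩
    constructor <;> intro i
    · simp only [Pi.add_apply, Matrix.mul_add, Matrix.add_mul, hX1 i, hY1 i]
    · simp only [Pi.add_apply, Matrix.transpose_add, Matrix.mul_add, Matrix.add_mul]
      rw [← hX2 i, ← hY2 i]
  smul_mem' := by
    rintro c X ⟨hX1, hX2⟩
    constructor <;> intro i
    · simp only [Pi.smul_apply, Matrix.mul_smul, Matrix.smul_mul, hX1 i]
    · simp only [Pi.smul_apply, Matrix.transpose_smul, Matrix.mul_smul, Matrix.smul_mul]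
      rw [← hX2 i]

/-!
The relation `τ₁ X_i = X_{i+1} τ₁` iterates to `X_i τ₁^t = τ₁^t X_{i-t}`, so every `X_i` is
lower triangular and determined by the first columns `a(j, r) = (X_j)_{r,0}`, which can be
prescribed freely. In these coordinates `X_i = Ω X_{-i}ᵀ Ω` becomes
`a(j, r) = (-1)^(r+1) a(r + 1 - j, r)` (indices from `0`), so the space is the fixed space of a
signed involution `T` of `ℂ^(4n²)`. Such a fixed space has dimension `(4n² + tr T) / 2`, and
`tr T` sums the signs over the fixed points `(j, r)`, those with `r + 1 = 2j`: there is one for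
each `j`, with sign `+1`, so `tr T = 2n`.
-/

namespace LinearMap

variable {K : Type*} [Field K]

theorem two_mul_finrank_eq_of_involutive [NeZero (2 : K)] {V : Type*} [AddCommGroup V]
    [Module K V] [FiniteDimensional K V] {T : V →ₗ[K] V} (hT : T ∘ₗ T = id)
    {p : Submodule K V} (hp : ∀ x, x ∈ p ↔ T x = x) :
    2 * (Module.finrank K p : K) = Module.finrank K V + trace K V T := by
  have hT' (x : V) : T (T x) = x := congr($hT x)
  have hproj : IsProj p ((2 : K)⁻¹ • (id + T)) := by
    refine ⟨fun x => (hp _).2 ?_, fun x hx => ?_⟩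
    · simp [hT', add_comm]
    · rw [smul_apply, add_apply, id_apply, (hp x).1 hx, ← two_smul K, smul_smul,
        inv_mul_cancel₀ two_ne_zero, one_smul]
  rw [← hproj.trace, map_smul, map_add, trace_id, smul_eq_mul, ← mul_assoc,
    mul_inv_cancel₀ two_ne_zero, one_mul]

theorem trace_pi_smul_proj {ι : Type*} [Fintype ι] [DecidableEq ι] (σ : ι → ι) (ε : ι → K) :
    trace K (ι → K) (pi fun i => ε i • proj (σ i)) = ∑ i with σ i = i, ε i := by
  rw [trace_eq_matrix_trace K (Pi.basisFun K ι), Matrix.trace, Finset.sum_filter]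
  refine Finset.sum_congr rfl fun i _ => ?_
  simp [Pi.single_apply]

theorem two_mul_finrank_eq_of_signed_involutive [NeZero (2 : K)] {ι : Type*} [Fintype ι]
    [DecidableEq ι] {σ : ι → ι} (hσ : Function.Involutive σ) {ε : ι → K}
    (hε : ∀ i, ε i * ε (σ i) = 1) {S : Submodule K (ι → K)}
    (hS : ∀ a, a ∈ S ↔ ∀ i, a i = ε i * a (σ i)) :
    2 * (Module.finrank K S : K) = Fintype.card ι + ∑ i with σ i = i, ε i := by
  rw [← Module.finrank_fintype_fun_eq_card K, ← trace_pi_smul_proj]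
  refine two_mul_finrank_eq_of_involutive ?_ fun a => (hS a).trans ?_
  · ext a i
    simp [hσ i, ← mul_assoc, hε]
  · simp [funext_iff, eq_comm]

end LinearMap

lemma ZMod.natCast_val_rev {m : ℕ} (s : Fin m) : ((s.rev : ℕ) : ZMod m) = -(s : ℕ) - 1 := by
  rw [Fin.val_rev, Nat.cast_sub (by omega), ZMod.natCast_self]
  push_cast
  ring

namespace Symplectic

variable {n : ℕ}

lemma tauMat_pow_apply (k : ℕ) (s t : Fin (2 * n)) :
    (tauMat n ^ k) s t = if (s : ℕ) = t + k then 1 else 0 := by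
  induction k generalizing s with
  | zero => simp [Matrix.one_apply, Fin.ext_iff]
  | succ k ih =>
    rw [pow_succ', Matrix.mul_apply]
    simp only [ih]
    simp only [tauMat, Matrix.of_apply, ite_mul, one_mul, zero_mul]
    by_cases h : (s : ℕ) = t + (k + 1)
    · rw [if_pos h, Finset.sum_eq_single ⟨t + k, by omega⟩]
      · simp [h, add_assoc]
      · intro l _ hl
        rw [if_neg (fun h' => hl (Fin.ext (by simp; omega)))]
      · simp
    · rw [if_neg h]
      exact Finset.sum_eq_zero fun l _ => ite_eq_right_iff.2 fun _ => if_neg (by omega)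

lemma tauMat_pow_mul_apply (k : ℕ) (M : Matrix (Fin (2 * n)) (Fin (2 * n)) ℂ) (s t : Fin (2 * n)) :
    (tauMat n ^ k * M) s t = if h : k ≤ s then M ⟨s - k, by omega⟩ t else 0 := by
  rw [Matrix.mul_apply]
  simp only [tauMat_pow_apply, ite_mul, one_mul, zero_mul]
  split_ifs with h
  · rw [Finset.sum_eq_single ⟨s - k, by omega⟩]
    · simp; omega
    · intro l _ hl
      rw [if_neg (fun h' => hl (Fin.ext (by simp; omega)))]
    · simp
  · exact Finset.sum_eq_zero fun l _ => if_neg (by omega)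

lemma mul_tauMat_pow_apply (k : ℕ) (M : Matrix (Fin (2 * n)) (Fin (2 * n)) ℂ) (s t : Fin (2 * n)) :
    (M * tauMat n ^ k) s t = if h : t + k < 2 * n then M s ⟨t + k, h⟩ else 0 := by
  rw [Matrix.mul_apply]
  simp only [tauMat_pow_apply, mul_ite, mul_one, mul_zero]
  split_ifs with h
  · rw [Finset.sum_eq_single ⟨t + k, h⟩]
    · simp
    · intro l _ hl
      rw [if_neg (fun h' => hl (Fin.ext h'))]
    · simp
  · exact Finset.sum_eq_zero fun l _ => if_neg (by omega)

lemma Omega_apply (s t : Fin (2 * n)) : Omega n s t = if t = s.rev then (-1) ^ (s : ℕ) else 0 := by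
  simp only [Omega, Matrix.of_apply, Fin.ext_iff, Fin.val_rev]
  congr 1
  · have := s.2; have := t.2; exact propext (by omega)
  · exact neg_one_pow_congr (by simp only [Nat.even_iff]; omega)

lemma Omega_mul_apply (M : Matrix (Fin (2 * n)) (Fin (2 * n)) ℂ) (s t : Fin (2 * n)) :
    (Omega n * M) s t = (-1) ^ (s : ℕ) * M s.rev t := by
  simp [Matrix.mul_apply, Omega_apply, ite_mul]

lemma mul_Omega_apply (M : Matrix (Fin (2 * n)) (Fin (2 * n)) ℂ) (s t : Fin (2 * n)) :
    (M * Omega n) s t = M s t.rev * (-1) ^ (t.rev : ℕ) := by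
  have (x : Fin (2 * n)) : t = x.rev ↔ x = t.rev := by rw [eq_comm, Fin.rev_eq_iff]
  simp [Matrix.mul_apply, Omega_apply, mul_ite, this]

lemma Omega_mul_transpose_mul_Omega_apply (M : Matrix (Fin (2 * n)) (Fin (2 * n)) ℂ)
    (s t : Fin (2 * n)) :
    (Omega n * Mᵀ * Omega n) s t = (-1) ^ ((s : ℕ) + t + 1) * M t.rev s.rev := by
  rw [mul_Omega_apply, Omega_mul_apply, Matrix.transpose_apply, mul_right_comm,
    ← pow_add]
  congr 1
  exact neg_one_pow_congr (by simp only [Nat.even_iff, Fin.val_rev]; omega)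

lemma mul_tauMat_pow_eq {X : ZMod (2 * n) → Matrix (Fin (2 * n)) (Fin (2 * n)) ℂ}
    (hX : ∀ i, tauMat n * X i = X (i + 1) * tauMat n) (i : ZMod (2 * n)) (k : ℕ) :
    X i * tauMat n ^ k = tauMat n ^ k * X (i - k) := by
  induction k with
  | zero => simp
  | succ k ih =>
    have hstep : X (i - k) = X (i - (k + 1 : ℕ) + 1) := by push_cast; ring_nf
    rw [pow_succ, ← mul_assoc, ih, mul_assoc, hstep, ← hX, ← mul_assoc, ← pow_succ]

def sympColumns (n : ℕ) : Submodule ℂ (ZMod (2 * n) × Fin (2 * n) → ℂ) where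
  carrier := {a | ∀ j r, a (j, r) = (-1) ^ ((r : ℕ) + 1) * a ((r : ℕ) + 1 - j, r)}
  zero_mem' := by simp
  add_mem' {a b} ha hb j r := by simp only [Pi.add_apply, ha j r, hb j r]; ring
  smul_mem' c a ha j r := by simp only [Pi.smul_apply, smul_eq_mul, ha j r]; ring

def ofColumns (a : ZMod (2 * n) × Fin (2 * n) → ℂ) (i : ZMod (2 * n)) :
    Matrix (Fin (2 * n)) (Fin (2 * n)) ℂ :=
  Matrix.of fun s t => if h : (t : ℕ) ≤ s then a (i - (t : ℕ), ⟨s - t, by omega⟩) else 0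

lemma ofColumns_mem {a : ZMod (2 * n) × Fin (2 * n) → ℂ} (ha : a ∈ sympColumns n) :
    ofColumns a ∈ sympLie n := by
  refine ⟨fun i => ?_, fun i => ?_⟩
  · ext s t
    rw [← pow_one (tauMat n), tauMat_pow_mul_apply, mul_tauMat_pow_apply]
    simp only [ofColumns, Matrix.of_apply]
    by_cases hts : (t : ℕ) + 1 ≤ s
    · rw [dif_pos (by omega), dif_pos (by omega), dif_pos (by omega), dif_pos (by omega)]
      congr 2
      · push_cast; ring
      · ext; dsimp only; omega
    · split_ifs <;> first | rfl | omega
  · ext s t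
    rw [Omega_mul_transpose_mul_Omega_apply]
    simp only [ofColumns, Matrix.of_apply]
    by_cases hts : (t : ℕ) ≤ s
    · rw [dif_pos hts, dif_pos (by simp only [Fin.val_rev]; omega), ha]
      congr 1
      · exact neg_one_pow_congr (by simp only [Nat.even_iff]; omega)
      · congr 1
        ext
        · rw [ZMod.natCast_val_rev, Nat.cast_sub hts]; ring
        · simp only [Fin.val_rev]; omega
    · rw [dif_neg hts, dif_neg (by simp only [Fin.val_rev]; omega), mul_zero]

variable [NeZero n]

lemma apply_eq_of_tauMat_mul_eq {X : ZMod (2 * n) → Matrix (Fin (2 * n)) (Fin (2 * n)) ℂ}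
    (hX : ∀ i, tauMat n * X i = X (i + 1) * tauMat n) (i : ZMod (2 * n)) (s t : Fin (2 * n)) :
    X i s t = if h : (t : ℕ) ≤ s then X (i - (t : ℕ)) ⟨s - t, by omega⟩ 0 else 0 := by
  have h := congr($(mul_tauMat_pow_eq hX i t) s 0)
  rw [mul_tauMat_pow_apply, tauMat_pow_mul_apply, dif_pos (by simp)] at h
  convert h using 2
  simp

lemma firstColumns_mem {X : ZMod (2 * n) → Matrix (Fin (2 * n)) (Fin (2 * n)) ℂ}
    (hX : X ∈ sympLie n) : (fun p => X p.1 p.2 0) ∈ sympColumns n := by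
  intro j r
  have h := congr($(hX.2 j) r 0)
  rw [Omega_mul_transpose_mul_Omega_apply, apply_eq_of_tauMat_mul_eq hX.1 (-j),
    dif_pos (by simp only [Fin.val_rev, Fin.val_zero]; omega)] at h
  dsimp only
  rw [h, Fin.val_zero, add_zero]
  congr 2
  · rw [ZMod.natCast_val_rev]; ring
  · ext; simp only [Fin.val_rev, Fin.val_zero]; omega

lemma ofColumns_firstColumns {X : ZMod (2 * n) → Matrix (Fin (2 * n)) (Fin (2 * n)) ℂ}
    (hX : ∀ i, tauMat n * X i = X (i + 1) * tauMat n) :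
    ofColumns (fun p => X p.1 p.2 0) = X := by
  funext i
  ext s t
  rw [apply_eq_of_tauMat_mul_eq hX]
  rfl

lemma firstColumns_ofColumns (a : ZMod (2 * n) × Fin (2 * n) → ℂ) :
    (fun p => ofColumns a p.1 p.2 0) = a := by
  funext ⟨j, r⟩
  simp [ofColumns]

def sympLieEquivColumns (n : ℕ) [NeZero n] : sympLie n ≃ₗ[ℂ] sympColumns n where
  toFun X := ⟨fun p => X.1 p.1 p.2 0, firstColumns_mem X.2⟩
  map_add' _ _ := rfl
  map_smul' _ _ := rfl
  invFun a := ⟨ofColumns a, ofColumns_mem a.2⟩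
  left_inv X := Subtype.ext (ofColumns_firstColumns X.2.1)
  right_inv a := Subtype.ext (firstColumns_ofColumns a.1)

lemma sum_neg_one_pow_fixedPoints :
    ∑ p : ZMod (2 * n) × Fin (2 * n) with
      (((p.2 : ℕ) + 1 - p.1, p.2) : ZMod (2 * n) × Fin (2 * n)) = p,
      (-1 : ℂ) ^ ((p.2 : ℕ) + 1) = 2 * n := by
  have hsum (j : ZMod (2 * n)) :
      ∑ r : Fin (2 * n), (if ((r : ℕ) + 1 - j : ZMod (2 * n)) = j
        then (-1 : ℂ) ^ ((r : ℕ) + 1) else 0) = 1 := by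
    set r₀ : Fin (2 * n) := ⟨(2 * j - 1).val, ZMod.val_lt _⟩
    have hr₀ : ((r₀ : ℕ) : ZMod (2 * n)) = 2 * j - 1 := ZMod.natCast_zmod_val _
    have hfix (r : Fin (2 * n)) : ((r : ℕ) + 1 - j : ZMod (2 * n)) = j ↔ r = r₀ := by
      constructor
      · intro h
        apply Fin.ext
        rw [← ZMod.val_cast_of_lt r.2, show ((r : ℕ) : ZMod (2 * n)) = 2 * j - 1 by
          linear_combination h]
      · rintro rfl
        rw [hr₀]
        ring
    have heven : Even ((r₀ : ℕ) + 1) := by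
      rw [← ZMod.natCast_eq_zero_iff_even]
      have h := congr(ZMod.castHom (dvd_mul_right 2 n) (ZMod 2) ($hr₀ + 1))
      simp only [sub_add_cancel, map_add, map_mul, map_natCast, map_ofNat, map_one] at h
      rw [Nat.cast_succ, h, show (2 : ZMod 2) = 0 from rfl, zero_mul]
    simp only [hfix, Finset.sum_ite_eq', Finset.mem_univ, if_true, heven.neg_one_pow]
  simp only [Finset.sum_filter, Fintype.sum_prod_type, Prod.mk.injEq, and_true, hsum,
    Finset.sum_const, Finset.card_univ, ZMod.card, nsmul_eq_mul, mul_one]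
  push_cast
  ring

lemma finrank_sympColumns : Module.finrank ℂ (sympColumns n) = 2 * n ^ 2 + n := by
  have h := LinearMap.two_mul_finrank_eq_of_signed_involutive
    (σ := fun p : ZMod (2 * n) × Fin (2 * n) => ((p.2 : ℕ) + 1 - p.1, p.2))
    (ε := fun p => (-1 : ℂ) ^ ((p.2 : ℕ) + 1)) (S := sympColumns n)
    (fun p => Prod.ext (sub_sub_cancel _ _) rfl)
    (fun _ => by rw [← mul_pow, neg_one_mul, neg_neg, one_pow])
    (fun a => ⟨fun ha p => ha p.1 p.2, fun ha j r => ha (j, r)⟩)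
  rw [sum_neg_one_pow_fixedPoints, Fintype.card_prod, ZMod.card, Fintype.card_fin] at h
  push_cast at h
  exact_mod_cast (by linear_combination h / 2 :
    (Module.finrank ℂ (sympColumns n) : ℂ) = 2 * n ^ 2 + n)

end Symplectic

/-- the Lie algebra of G^{sp} has dimension 2n² + n over ℂ. -/
theorem statement14 (n : ℕ) (hn : 1 ≤ n) :
    Module.finrank ℂ (sympLie n) = 2*n^2 + n := by
  have : NeZero n := NeZero.of_pos hn
  rw [(Symplectic.sympLieEquivColumns n).finrank_eq, Symplectic.finrank_sympColumns]
end

section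
/- Let 0 ≤ k ≤ n and let J ∈ JP(k,2n) be maximal, i.e. for all i ∈ ℤ/2nℤ, 2n ∈ J_i implies 1 ∈ J_{i+1}. Then J is symplectic (J_i ⊆ R(J_{−i}) for all i ∈ ℤ/2nℤ) if and only if J_0 is symplectic, i.e. a ∈ J_0 implies 2n+1−a ∉ J_0; equivalently, if and only if J_n is symplectic, i.e. a ∈ J_n implies 2n+1−a ∉ J_n. -/
/-- Injectivity of reduction mod 2n on {1,…,2n}. -/
lemma st16_modinj {n : ℕ} (hn : 1 ≤ n) {c d : ℕ} (hc1 : 1 ≤ c) (hc2 : c ≤ 2*n)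
    (hd1 : 1 ≤ d) (hd2 : d ≤ 2*n) (h : c % (2*n) = d % (2*n)) : c = d := by
  rcases eq_or_lt_of_le hc2 with hc | hc
  · rcases eq_or_lt_of_le hd2 with hd | hd
    · omega
    · rw [hc, Nat.mod_self, Nat.mod_eq_of_lt hd] at h; omega
  · rcases eq_or_lt_of_le hd2 with hd | hd
    · subst hd
      rw [Nat.mod_self, Nat.mod_eq_of_lt hc] at h; omega
    · rw [Nat.mod_eq_of_lt hc, Nat.mod_eq_of_lt hd] at h; omega

/-- Arithmetic identity: shifting the "reflection" by m equals reflecting the shift by 2n−m. -/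
lemma st16_refl_shift {n : ℕ} (hn : 1 ≤ n) (a m : ℕ) (h1 : 1 ≤ a) (h2 : a ≤ 2*n)
    (h3 : m ≤ 2*n) :
    (2*n + 1 - a + m - 1) % (2*n) + 1 = 2*n + 1 - ((a + (2*n - m) - 1) % (2*n) + 1) := by
  have h2n : 0 < 2*n := by omega
  set x := (2*n + 1 - a + m - 1) % (2*n) with hx
  set y := (a + (2*n - m) - 1) % (2*n) with hy
  have hxl : x < 2*n := Nat.mod_lt _ h2n
  have hyl : y < 2*n := Nat.mod_lt _ h2n
  have hsum : (x + y) % (2*n) = 2*n - 1 := by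
    rw [hx, hy, ← Nat.add_mod]
    have hAB : (2*n + 1 - a + m - 1) + (a + (2*n - m) - 1) = (2*n - 1) + 1*(2*n) := by
      omega
    rw [hAB, Nat.add_mul_mod_self_right, Nat.mod_eq_of_lt (by omega)]
  have hxy : x + y = 2*n - 1 := by
    rcases Nat.lt_or_ge (x + y) (2*n) with h | h
    · rw [Nat.mod_eq_of_lt h] at hsum; omega
    · rw [Nat.mod_eq_sub_mod h, Nat.mod_eq_of_lt (by omega)] at hsum; omega
  omega

/-- for a maximal J ∈ JP(k,2n) (k ≤ n), J is symplectic iff the set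
J_0 is symplectic, and iff the set J_n is symplectic. -/
theorem statement16 (n k : ℕ) (hn : 1 ≤ n) (hk : k ≤ n)
    (J : ZMod (2*n) → Finset ℕ) (hJ : IsJP n k J)
    (hmax : ∀ i, 2*n ∈ J i → 1 ∈ J (i + 1)) :
    ((∀ i, J i ⊆ RSet n (J (-i))) ↔ ∀ a ∈ J 0, 2*n + 1 - a ∉ J 0) ∧
    ((∀ i, J i ⊆ RSet n (J (-i))) ↔
      ∀ a ∈ J (n : ZMod (2*n)), 2*n + 1 - a ∉ J (n : ZMod (2*n))) := by
  obtain ⟨hsub, hcard, hshift⟩ := hJ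
  have h2n : 0 < 2*n := by omega
  haveI : NeZero (2*n) := ⟨by omega⟩
  -- forward step
  have hCfwd : ∀ (i : ZMod (2*n)) (a : ℕ), 1 ≤ a → a ≤ 2*n → a ∈ J i →
      a % (2*n) + 1 ∈ J (i + 1) := by
    intro i a h1 h2 ha
    rcases eq_or_lt_of_le h2 with h | h
    · subst h
      rw [Nat.mod_self]
      simpa using hmax i ha
    · rw [Nat.mod_eq_of_lt h]
      exact hshift i a h1 (by omega) ha
  -- J (i+1) is the image of J i under the cyclic shift
  have himg : ∀ i : ZMod (2*n), J (i+1) = (J i).image (fun x => x % (2*n) + 1) := by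
    intro i
    have hsubset : (J i).image (fun x => x % (2*n) + 1) ⊆ J (i+1) := by
      intro b hb
      simp only [Finset.mem_image] at hb
      obtain ⟨a, ha, rfl⟩ := hb
      have h' := hsub i ha
      rw [Finset.mem_Icc] at h'
      exact hCfwd i a h'.1 h'.2 ha
    have hinj : Set.InjOn (fun x => x % (2*n) + 1) (J i) := by
      intro c hc d hd h
      have hc' := hsub i hc; have hd' := hsub i hd
      rw [Finset.mem_Icc] at hc' hd'
      simp only at h
      exact st16_modinj hn hc'.1 hc'.2 hd'.1 hd'.2 (Nat.add_right_cancel h)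
    have hcards : (J (i+1)).card ≤ ((J i).image (fun x => x % (2*n) + 1)).card := by
      rw [Finset.card_image_of_injOn hinj, hcard, hcard]
    exact (Finset.eq_of_subset_of_card_le hsubset hcards).symm
  -- one-step iff
  have hCiff : ∀ (i : ZMod (2*n)) (a : ℕ), 1 ≤ a → a ≤ 2*n →
      (a ∈ J i ↔ a % (2*n) + 1 ∈ J (i + 1)) := by
    intro i a h1 h2
    constructor
    · exact hCfwd i a h1 h2
    · intro hb
      rw [himg i, Finset.mem_image] at hb
      obtain ⟨c, hc, hce⟩ := hb
      have hc' := hsub i hc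
      rw [Finset.mem_Icc] at hc'
      have hca : c = a :=
        st16_modinj hn hc'.1 hc'.2 h1 h2 (Nat.add_right_cancel hce)
      exact hca ▸ hc
  -- m-step iff
  have hE : ∀ (m : ℕ) (i : ZMod (2*n)) (a : ℕ), 1 ≤ a → a ≤ 2*n →
      (a ∈ J i ↔ (a + m - 1) % (2*n) + 1 ∈ J (i + (m : ZMod (2*n)))) := by
    intro m
    induction m with
    | zero =>
      intro i a h1 h2
      have e : (a + 0 - 1) % (2*n) + 1 = a := by
        rw [Nat.add_zero, Nat.mod_eq_of_lt (by omega)]; omega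
      rw [e]
      simp
    | succ m ih =>
      intro i a h1 h2
      have hb1 : 1 ≤ (a + m - 1) % (2*n) + 1 := by omega
      have hb2 : (a + m - 1) % (2*n) + 1 ≤ 2*n := by
        have := Nat.mod_lt (a + m - 1) h2n; omega
      rw [ih i a h1 h2, hCiff (i + (m : ZMod (2*n))) _ hb1 hb2]
      have e1 : ((a + m - 1) % (2*n) + 1) % (2*n) = (a + (m+1) - 1) % (2*n) := by
        rw [Nat.mod_add_mod]
        congr 1
        omega
      have e2 : (((m+1 : ℕ)) : ZMod (2*n)) = (m : ZMod (2*n)) + 1 := by push_cast; ring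
      rw [e1, e2, add_assoc]
  -- reformulation of the symplectic condition
  have hR : (∀ i, J i ⊆ RSet n (J (-i))) ↔ (∀ i, ∀ a ∈ J i, 2*n + 1 - a ∉ J (-i)) := by
    constructor
    · intro h i a ha hcontra
      have hm := h i ha
      rw [RSet, Finset.mem_sdiff] at hm
      apply hm.2
      rw [Finset.mem_image]
      refine ⟨2*n + 1 - a, hcontra, ?_⟩
      have ha' := hsub i ha; rw [Finset.mem_Icc] at ha'
      omega
    · intro h i a ha
      rw [RSet, Finset.mem_sdiff]
      refine ⟨hsub i ha, ?_⟩
      rw [Finset.mem_image]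
      rintro ⟨x, hx, hxe⟩
      have hx' := hsub (-i) hx; rw [Finset.mem_Icc] at hx'
      have ha' := hsub i ha; rw [Finset.mem_Icc] at ha'
      have hxa : x = 2*n + 1 - a := by omega
      exact h i a ha (hxa ▸ hx)
  -- key: symplecticity of J 0 propagates everywhere
  have hkey : (∀ a ∈ J 0, 2*n + 1 - a ∉ J 0) →
      (∀ i, ∀ a ∈ J i, 2*n + 1 - a ∉ J (-i)) := by
    intro h0 i a ha hcontra
    set m := i.val with hm
    have hmlt : m < 2*n := ZMod.val_lt i
    have hicast : ((m : ℕ) : ZMod (2*n)) = i := ZMod.natCast_zmod_val i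
    have ha' := hsub i ha; rw [Finset.mem_Icc] at ha'
    have hb := (hE (2*n - m) i a ha'.1 ha'.2).mp ha
    have hz : i + (((2*n - m : ℕ)) : ZMod (2*n)) = 0 := by
      rw [← hicast, ← Nat.cast_add, (show m + (2*n - m) = 2*n by omega),
        ZMod.natCast_self]
    rw [hz] at hb
    have hc := (hE m (-i) (2*n + 1 - a) (by omega) (by omega)).mp hcontra
    have hz2 : -i + ((m : ℕ) : ZMod (2*n)) = 0 := by rw [hicast]; ring
    rw [hz2, st16_refl_shift hn a m ha'.1 ha'.2 (by omega)] at hc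
    exact h0 _ hb hc
  -- symplecticity of J n implies that of J 0
  have hn0 : (∀ a ∈ J (n : ZMod (2*n)), 2*n + 1 - a ∉ J (n : ZMod (2*n))) →
      (∀ a ∈ J 0, 2*n + 1 - a ∉ J 0) := by
    intro hN b hb hb2
    have hb' := hsub 0 hb; rw [Finset.mem_Icc] at hb'
    have h1 := (hE n 0 b hb'.1 hb'.2).mp hb
    have h2 := (hE n 0 (2*n + 1 - b) (by omega) (by omega)).mp hb2
    rw [zero_add] at h1 h2
    rw [st16_refl_shift hn b n hb'.1 hb'.2 (by omega),
      (show 2*n - n = n by omega)] at h2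
    exact hN _ h1 h2
  have hnegn : -((n : ℕ) : ZMod (2*n)) = ((n : ℕ) : ZMod (2*n)) := by
    have hadd : ((n : ℕ) : ZMod (2*n)) + ((n : ℕ) : ZMod (2*n)) = 0 := by
      rw [← Nat.cast_add, (show n + n = 2*n by omega), ZMod.natCast_self]
    exact neg_eq_of_add_eq_zero_left hadd
  constructor
  · constructor
    · intro h a ha
      have := hR.mp h 0 a ha
      simpa using this
    · intro h0
      exact hR.mpr (hkey h0)
  · constructor
    · intro h
      have h' := hR.mp h (n : ZMod (2*n))
      rw [hnegn] at h'
      exact h'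
    · intro hN
      exact hR.mpr (hkey (hn0 hN))
end
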